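/- For all n ≥ 1, the number of permutations of [n] avoiding both generalized patterns 1-23 and 2-31 equals binom(n,2) + 1. -/
import Mathlib

def contains123 {n : ℕ} (π : Equiv.Perm (Fin n)) : Prop :=
  ∃ i j : ℕ, ∃ (_ : i < j) (hj : j + 1 < n),
    π ⟨i, by omega⟩ < π ⟨j, by omega⟩ ∧ π ⟨j, by omega⟩ < π ⟨j + 1, hj⟩

def contains231 {n : ℕ} (π : Equiv.Perm (Fin n)) : Prop :=
  ∃ i j : ℕ, ∃ (_ : i < j) (hj : j + 1 < n),
    π ⟨j + 1, hj⟩ < π ⟨i, by omega⟩ ∧ π ⟨i, by omega⟩ < π ⟨j, by omega⟩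

namespace Stmt6Aux

def pf {n : ℕ} (π : Equiv.Perm (Fin n)) (j : ℕ) : ℕ :=
  if h : j < n then (π ⟨j, h⟩).val else n

lemma pf_lt {n : ℕ} (π : Equiv.Perm (Fin n)) {j : ℕ} (h : j < n) : pf π j < n := by
  simp only [pf, dif_pos h]; exact (π ⟨j, h⟩).isLt

lemma pf_inj {n : ℕ} (π : Equiv.Perm (Fin n)) {i j : ℕ} (hi : i < n) (hj : j < n)
    (h : pf π i = pf π j) : i = j := by
  simp only [pf, dif_pos hi, dif_pos hj] at h
  have h2 := π.injective (Fin.val_injective h)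
  exact congrArg Fin.val h2

lemma pf_surj {n : ℕ} (π : Equiv.Perm (Fin n)) {v : ℕ} (hv : v < n) :
    ∃ i, i < n ∧ pf π i = v := by
  refine ⟨(π.symm ⟨v, hv⟩).val, (π.symm ⟨v, hv⟩).isLt, ?_⟩
  simp only [pf, dif_pos (π.symm ⟨v, hv⟩).isLt]
  rw [Fin.eta, Equiv.apply_symm_apply]

/-- explicit value function of the candidate avoider with ascent position s and
    ascent-top value a. -/
def gv (n s a j : ℕ) : ℕ :=
  if j + a + 1 < n then n - 1 - j
  else if j ≤ s then s - j
  else a + s + 1 - j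


lemma gv_lt {n s a : ℕ} (h1 : n ≤ s + a + 1) (h2 : s + 1 < n) (h3 : a < n)
    {j : ℕ} (hj : j < n) : gv n s a j < n := by
  unfold gv; split_ifs <;> omega

lemma gv_inj {n s a : ℕ} (h1 : n ≤ s + a + 1) (h2 : s + 1 < n) (h3 : a < n)
    {i j : ℕ} (hi : i < n) (hj : j < n) (h : gv n s a i = gv n s a j) : i = j := by
  unfold gv at h; split_ifs at h <;> omega

lemma gv_asc {n s a : ℕ} (h1 : n ≤ s + a + 1) (h2 : s + 1 < n) (h3 : a < n)
    {j : ℕ} (hj : j + 1 < n) : gv n s a j < gv n s a (j + 1) ↔ j = s := by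
  unfold gv; split_ifs <;> omega

lemma gv_avoid123 {n s a : ℕ} (h1 : n ≤ s + a + 1) (h2 : s + 1 < n) (h3 : a < n)
    {i j : ℕ} (hij : i < j) (hj : j + 1 < n) (hx : gv n s a i < gv n s a j)
    (hy : gv n s a j < gv n s a (j + 1)) : False := by
  unfold gv at hx hy; split_ifs at hx hy <;> omega

lemma gv_avoid231 {n s a : ℕ} (h1 : n ≤ s + a + 1) (h2 : s + 1 < n) (h3 : a < n)
    {i j : ℕ} (hij : i < j) (hj : j + 1 < n) (hx : gv n s a (j + 1) < gv n s a i)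
    (hy : gv n s a i < gv n s a j) : False := by
  unfold gv at hx hy; split_ifs at hx hy <;> omega


section Structure

variable {n : ℕ} {π : Equiv.Perm (Fin n)}

/-- avoidance of 1-23 in pf form -/
def H123 (π : Equiv.Perm (Fin n)) : Prop :=
  ∀ i j, i < j → j + 1 < n → pf π i < pf π j → pf π j < pf π (j + 1) → False

/-- avoidance of 2-31 in pf form -/
def H231 (π : Equiv.Perm (Fin n)) : Prop :=
  ∀ i j, i < j → j + 1 < n → pf π (j + 1) < pf π i → pf π i < pf π j → False

/-- descending run: if all consecutive steps in [lo,hi] descend, values descend. -/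
lemma run_desc {lo hi : ℕ} (hd : ∀ j, lo ≤ j → j + 1 ≤ hi → pf π (j + 1) < pf π j) :
    ∀ j k, lo ≤ j → j < k → k ≤ hi → pf π k < pf π j := by
  have key : ∀ d j k, lo ≤ j → k = j + 1 + d → k ≤ hi → pf π k < pf π j := by
    intro d
    induction d with
    | zero =>
      intro j k hj hk hk2
      subst hk
      exact hd j hj (by omega)
    | succ d ih =>
      intro j k hj hk hk2
      subst hk
      have h1 := ih j (j + 1 + d) hj rfl (by omega)
      have h2 := hd (j + 1 + d) (by omega) (by omega)
      have hrw : pf π (j + 1 + (d + 1)) = pf π (j + 1 + d + 1) := rfl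
      omega
  intro j k hj hjk hk
  exact key (k - (j + 1)) j k hj (by omega) hk

/-- If there is an ascent at j, then pf π j is smaller than all earlier values. -/
lemma prefix_min (h123 : H123 π) {i j : ℕ} (hij : i < j) (hj : j + 1 < n)
    (hasc : pf π j < pf π (j + 1)) : pf π j < pf π i := by
  rcases lt_trichotomy (pf π i) (pf π j) with h | h | h
  · exact absurd (h123 i j hij hj h hasc) (by simp)
  · exact absurd (pf_inj π (by omega) (by omega) h) (by omega)
  · exact h

/-- crossing lemma: if pf π s < pf π j, pf π t < pf π s with s < j ≤ t < n, contradiction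
    with avoiding 2-31. -/
lemma crossing (h231 : H231 π) {s t : ℕ} (ht : t < n) (hts : pf π t < pf π s) :
    ∀ d j, j + d = t → s < j → pf π s < pf π j → False := by
  intro d
  induction d with
  | zero =>
    intro j he hsj h
    have hjt : j = t := by omega
    subst hjt
    omega
  | succ d ih =>
    intro j he hsj h
    rcases lt_trichotomy (pf π (j + 1)) (pf π s) with h' | h' | h'
    · exact h231 s j hsj (by omega) h' h
    · have := pf_inj π (by omega) (by omega) h'
      omega
    · exact ih (j + 1) (by omega) (by omega) h'

/-- ascent predicate -/
def Asc (π : Equiv.Perm (Fin n)) (s : ℕ) : Prop := s + 1 < n ∧ pf π s < pf π (s + 1)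

lemma asc_lt_false (h123 : H123 π) (h231 : H231 π) {s t : ℕ} (hst : s < t)
    (hs : Asc π s) (ht : Asc π t) : False := by
  obtain ⟨ht1, ht2⟩ := ht
  obtain ⟨hs1, hs2⟩ := hs
  have h1 : pf π t < pf π s := prefix_min h123 hst ht1 ht2
  exact crossing h231 (by omega) h1 (t - (s + 1)) (s + 1) (by omega) (by omega) hs2

lemma asc_unique (h123 : H123 π) (h231 : H231 π) {s t : ℕ}
    (hs : Asc π s) (ht : Asc π t) : s = t := by
  rcases lt_trichotomy s t with h | h | h
  · exact absurd (asc_lt_false h123 h231 h hs ht) (by simp)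
  · exact h
  · exact absurd (asc_lt_false h123 h231 h ht hs) (by simp)

/-- with a unique ascent at s, every other position descends. -/
lemma desc_elsewhere (h123 : H123 π) (h231 : H231 π) {s : ℕ} (hs : Asc π s)
    {j : ℕ} (hj : j + 1 < n) (hne : j ≠ s) : pf π (j + 1) < pf π j := by
  rcases lt_trichotomy (pf π (j + 1)) (pf π j) with h | h | h
  · exact h
  · exact absurd (pf_inj π (by omega) (by omega) h.symm) (by omega)
  · exact absurd (asc_unique h123 h231 ⟨hj, h⟩ hs) hne

/-- a value strictly inside a descent must sit strictly after the descent. -/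
lemma gap_pos (h231 : H231 π) {j v : ℕ} (hj : j + 1 < n) (hv : v < n)
    (hlo : pf π (j + 1) < v) (hhi : v < pf π j) :
    ∃ i, j + 1 < i ∧ i < n ∧ pf π i = v := by
  obtain ⟨i, hi, hpi⟩ := pf_surj π hv
  refine ⟨i, ?_, hi, hpi⟩
  by_contra hcon
  have hij : i < j ∨ i = j ∨ i = j + 1 := by omega
  rcases hij with h | h | h
  · exact h231 i j h hj (by omega) (by omega)
  · subst h; omega
  · subst h; omega


/-- key: suffix after the ascent descends by exactly 1 each step. -/
lemma suffix_eq (h123 : H123 π) (h231 : H231 π) {s : ℕ} (hs : Asc π s) :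
    ∀ k, s + 1 + k < n → pf π (s + 1 + k) + k = pf π (s + 1) := by
  have hs1 := hs.1
  have hs2 := hs.2
  intro k
  induction k with
  | zero => intro _; rfl
  | succ k ih =>
    intro hk
    have hk' : s + 1 + k < n := by omega
    have hkk : s + 1 + (k + 1) = (s + 1 + k) + 1 := rfl
    rw [hkk]
    have hdesc : pf π ((s + 1 + k) + 1) < pf π (s + 1 + k) :=
      desc_elsewhere h123 h231 hs (by omega) (by omega)
    have hstep : pf π ((s + 1 + k) + 1) + 1 = pf π (s + 1 + k) := by
      by_contra hgap
      obtain ⟨i, hi1, hi2, hpi⟩ := gap_pos h231 (j := s + 1 + k)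
        (v := pf π ((s + 1 + k) + 1) + 1) (by omega)
        (by have := pf_lt π (j := s + 1 + k) (by omega); omega) (by omega) (by omega)
      -- i is strictly after the descent, but everything after s+1 descends
      have hlt : pf π i < pf π ((s + 1 + k) + 1) := by
        refine run_desc (lo := s + 1) (hi := n - 1) ?_ ((s + 1 + k) + 1) i (by omega)
          (by omega) (by omega)
        intro j hj1 hj2
        exact desc_elsewhere h123 h231 hs (by omega) (by omega)
      omega
    have := ih hk'
    omega

/-- the value at the ascent position is 0. -/
lemma pf_asc_zero (h123 : H123 π) (h231 : H231 π) {s : ℕ} (hs : Asc π s) :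
    pf π s = 0 := by
  have hs1 := hs.1
  have hs2 := hs.2
  obtain ⟨i0, hi0n, h0⟩ := pf_surj π (v := 0) (by omega)
  by_cases hcase : i0 ≤ s
  · -- prefix descends, so pf π s ≤ pf π i0 = 0
    rcases eq_or_lt_of_le hcase with h | h
    · rw [← h]; exact h0
    · have : pf π s < pf π i0 := by
        refine run_desc (lo := 0) (hi := s) ?_ i0 s (by omega) h (by omega)
        intro j hj1 hj2
        exact desc_elsewhere h123 h231 hs (by omega) (by omega)
      omega
  · -- 0 in the suffix: contradiction
    exfalso
    have hk := suffix_eq h123 h231 hs (i0 - (s + 1)) (by omega)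
    rw [show s + 1 + (i0 - (s + 1)) = i0 by omega, h0] at hk
    -- so a = i0 - s - 1 ≤ n - s - 2, and pf π s < a
    set a := pf π (s + 1) with ha
    have hps : pf π s < a := hs.2
    have hk0 : a - pf π s ≤ a := by omega
    have hsk : s + 1 + (a - pf π s) < n := by omega
    have h2 := suffix_eq h123 h231 hs (a - pf π s) hsk
    have : pf π (s + 1 + (a - pf π s)) = pf π s := by omega
    have := pf_inj π (by omega) (by omega) this
    omega

/-- the parameter constraint. -/
lemma asc_constraint (h123 : H123 π) (h231 : H231 π) {s : ℕ} (hs : Asc π s) :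
    n ≤ s + pf π (s + 1) + 1 := by
  have hs1 := hs.1
  have hs2 := hs.2
  have h0 := pf_asc_zero h123 h231 hs
  have hlast := suffix_eq h123 h231 hs (n - 1 - (s + 1)) (by omega)
  rw [show s + 1 + (n - 1 - (s + 1)) = n - 1 by omega] at hlast
  have hne : pf π (n - 1) ≠ 0 := by
    intro hz
    have : pf π (n - 1) = pf π s := by omega
    have := pf_inj π (by omega) (by omega) this
    omega
  omega


/-- prefix formula: positions ≤ s. -/
lemma prefix_eq (h123 : H123 π) (h231 : H231 π) {s : ℕ} (hs : Asc π s) :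
    ∀ d j, j + d = s → pf π j = gv n s (pf π (s + 1)) j := by
  have hs1 := hs.1
  have hs2 := hs.2
  set a := pf π (s + 1) with ha
  have hcon : n ≤ s + a + 1 := asc_constraint h123 h231 hs
  have haa : a < n := pf_lt π (by omega)
  have h0 : pf π s = 0 := pf_asc_zero h123 h231 hs
  have hsuf : ∀ k, s + 1 + k < n → pf π (s + 1 + k) + k = a := suffix_eq h123 h231 hs
  -- prefix descends
  have hpre : ∀ i1 i2, i1 < i2 → i2 ≤ s → pf π i2 < pf π i1 := by
    intro i1 i2 h12 h2s
    refine run_desc (lo := 0) (hi := s) ?_ i1 i2 (by omega) h12 h2s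
    intro j hj1 hj2
    exact desc_elsewhere h123 h231 hs (by omega) (by omega)
  intro d
  induction d with
  | zero =>
    intro j hj
    have : j = s := by omega
    subst this
    unfold gv
    split_ifs <;> omega
  | succ d ih =>
    intro j hj
    have hjs : j < s := by omega
    have hy : pf π (j + 1) = gv n s a (j + 1) := ih (j + 1) (by omega)
    have hd : pf π (j + 1) < pf π j :=
      desc_elsewhere h123 h231 hs (by omega) (by omega)
    have hxlt : pf π j < n := pf_lt π (by omega)
    -- any value strictly inside this descent is a suffix value
    have hbet : ∀ v, pf π (j + 1) < v → v < pf π j → a + s + 2 ≤ v + n ∧ v ≤ a := by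
      intro v hv1 hv2
      obtain ⟨i, hi1, hi2, hpi⟩ := gap_pos h231 (by omega) (by omega) hv1 hv2
      by_cases his : i ≤ s
      · exact absurd (hpre (j + 1) i (by omega) his) (by omega)
      · have hk := hsuf (i - (s + 1)) (by omega)
        rw [show s + 1 + (i - (s + 1)) = i by omega, hpi] at hk
        omega
    -- pf π j is not a suffix value
    have hns : ¬(a + s + 2 ≤ pf π j + n ∧ pf π j ≤ a) := by
      rintro ⟨hA, hB⟩
      have hk := hsuf (a - pf π j) (by omega)
      have : pf π (s + 1 + (a - pf π j)) = pf π j := by omega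
      have := pf_inj π (by omega) (by omega) this
      omega
    by_cases hc1 : j + a + 1 < n
    · by_cases hc2 : (j + 1) + a + 1 < n
      · -- pf π (j+1) = n - 2 - j, target n - 1 - j
        have hy' : pf π (j + 1) = n - 2 - j := by
          unfold gv at hy; split_ifs at hy <;> omega
        rcases lt_trichotomy (pf π j) (n - 1 - j) with h | h | h
        · omega
        · unfold gv; split_ifs <;> omega
        · exfalso
          have := hbet (n - 1 - j) (by omega) (by omega)
          omega
      · -- pf π (j+1) = s - (j+1), target a + 1 = n - 1 - j
        have hy' : pf π (j + 1) = s - (j + 1) := by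
          unfold gv at hy; split_ifs at hy <;> omega
        have hxa : a + 1 ≤ pf π j := by
          by_contra hcon2
          exact hns (by omega)
        rcases lt_trichotomy (pf π j) (a + 2) with h | h | h
        · unfold gv; split_ifs <;> omega
        · exfalso
          have := hbet (a + 1) (by omega) (by omega)
          omega
        · exfalso
          have := hbet (a + 1) (by omega) (by omega)
          omega
    · -- target s - j
      have hy' : pf π (j + 1) = s - (j + 1) := by
        unfold gv at hy; split_ifs at hy <;> omega
      rcases lt_trichotomy (pf π j) (s - j + 1) with h | h | h
      · unfold gv; split_ifs <;> omega
      · exfalso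
        have := hbet (s - j) (by omega) (by omega)
        omega
      · exfalso
        have := hbet (s - j) (by omega) (by omega)
        omega

/-- full structure theorem: an avoider with an ascent at s is gv. -/
lemma pf_eq_gv (h123 : H123 π) (h231 : H231 π) {s : ℕ} (hs : Asc π s) :
    ∀ j, j < n → pf π j = gv n s (pf π (s + 1)) j := by
  have hs1 := hs.1
  have hs2 := hs.2
  set a := pf π (s + 1) with ha
  have hcon : n ≤ s + a + 1 := asc_constraint h123 h231 hs
  intro j hj
  by_cases hjs : j ≤ s
  · exact prefix_eq h123 h231 hs (s - j) j (by omega)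
  · have hk := suffix_eq h123 h231 hs (j - (s + 1)) (by omega)
    rw [show s + 1 + (j - (s + 1)) = j by omega] at hk
    unfold gv
    split_ifs <;> omega

/-- a permutation with no ascent is the decreasing one. -/
lemma noasc_eq (hno : ∀ t, ¬ Asc π t) : ∀ j, j < n → pf π j + j + 1 = n := by
  have hdesc : ∀ j, j + 1 < n → pf π (j + 1) < pf π j := by
    intro j hj
    rcases lt_trichotomy (pf π (j + 1)) (pf π j) with h | h | h
    · exact h
    · exact absurd (pf_inj π (by omega) (by omega) h.symm) (by omega)
    · exact absurd ⟨hj, h⟩ (hno j)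
  have hub : ∀ j, j < n → pf π j + j + 1 ≤ n := by
    intro j
    induction j with
    | zero => intro h; have := pf_lt π h; omega
    | succ j ih =>
      intro h
      have h1 := ih (by omega)
      have h2 := hdesc j (by omega)
      omega
  have hlb : ∀ d j, j + d + 1 = n → d ≤ pf π j := by
    intro d
    induction d with
    | zero => intro j hj; omega
    | succ d ih =>
      intro j hj
      have h1 := ih (j + 1) (by omega)
      have h2 := hdesc j (by omega)
      omega
  intro j hj
  have := hub j hj
  have := hlb (n - 1 - j) j (by omega)
  omega

end Structure

section Assembly

lemma pf_val {n : ℕ} (π : Equiv.Perm (Fin n)) {j : ℕ} (h : j < n) :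
    pf π j = (π ⟨j, h⟩).val := dif_pos h

lemma pf_apply {n : ℕ} (π : Equiv.Perm (Fin n)) (x : Fin n) :
    (π x).val = pf π x.val := by rw [pf_val π x.2, Fin.eta]

variable {n : ℕ} {π : Equiv.Perm (Fin n)}

lemma not_contains123 (h : H123 π) : ¬ contains123 π := by
  rintro ⟨i, j, hij, hj, h1, h2⟩
  exact h i j hij hj
    (by rw [pf_val π (show i < n by omega), pf_val π (show j < n by omega)]; exact h1)
    (by rw [pf_val π (show j < n by omega), pf_val π hj]; exact h2)

lemma not_contains231 (h : H231 π) : ¬ contains231 π := by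
  rintro ⟨i, j, hij, hj, h1, h2⟩
  exact h i j hij hj
    (by rw [pf_val π hj, pf_val π (show i < n by omega)]; exact h1)
    (by rw [pf_val π (show i < n by omega), pf_val π (show j < n by omega)]; exact h2)

lemma H123_of (h : ¬ contains123 π) : H123 π := by
  intro i j hij hj h1 h2
  apply h
  refine ⟨i, j, hij, hj, ?_, ?_⟩
  · rw [pf_val π (show i < n by omega), pf_val π (show j < n by omega)] at h1; exact h1
  · rw [pf_val π (show j < n by omega), pf_val π hj] at h2; exact h2

lemma H231_of (h : ¬ contains231 π) : H231 π := by
  intro i j hij hj h1 h2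
  apply h
  refine ⟨i, j, hij, hj, ?_, ?_⟩
  · rw [pf_val π hj, pf_val π (show i < n by omega)] at h1; exact h1
  · rw [pf_val π (show i < n by omega), pf_val π (show j < n by omega)] at h2; exact h2

/-- the explicit avoider as a permutation -/
noncomputable def gperm (n s a : ℕ) (h1 : n ≤ s + a + 1) (h2 : s + 1 < n) (h3 : a < n) :
    Equiv.Perm (Fin n) :=
  Equiv.ofBijective (fun j => ⟨gv n s a j.1, gv_lt h1 h2 h3 j.2⟩)
    (Finite.injective_iff_bijective.mp fun i j h =>
      Fin.ext (gv_inj h1 h2 h3 i.2 j.2 (congrArg Fin.val h)))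

lemma pf_gperm {s a : ℕ} (h1 : n ≤ s + a + 1) (h2 : s + 1 < n) (h3 : a < n)
    {j : ℕ} (hj : j < n) : pf (gperm n s a h1 h2 h3) j = gv n s a j := by
  rw [pf_val _ hj]
  rfl

lemma gperm_H123 {s a : ℕ} (h1 : n ≤ s + a + 1) (h2 : s + 1 < n) (h3 : a < n) :
    H123 (gperm n s a h1 h2 h3) := by
  intro i j hij hj hx hy
  rw [pf_gperm h1 h2 h3 (show i < n by omega), pf_gperm h1 h2 h3 (show j < n by omega)] at hx
  rw [pf_gperm h1 h2 h3 (show j < n by omega), pf_gperm h1 h2 h3 hj] at hy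
  exact gv_avoid123 h1 h2 h3 hij hj hx hy

lemma gperm_H231 {s a : ℕ} (h1 : n ≤ s + a + 1) (h2 : s + 1 < n) (h3 : a < n) :
    H231 (gperm n s a h1 h2 h3) := by
  intro i j hij hj hx hy
  rw [pf_gperm h1 h2 h3 hj, pf_gperm h1 h2 h3 (show i < n by omega)] at hx
  rw [pf_gperm h1 h2 h3 (show i < n by omega), pf_gperm h1 h2 h3 (show j < n by omega)] at hy
  exact gv_avoid231 h1 h2 h3 hij hj hx hy

lemma gperm_asc {s a : ℕ} (h1 : n ≤ s + a + 1) (h2 : s + 1 < n) (h3 : a < n) :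
    Asc (gperm n s a h1 h2 h3) s := by
  refine ⟨h2, ?_⟩
  rw [pf_gperm h1 h2 h3 (show s < n by omega), pf_gperm h1 h2 h3 h2]
  exact (gv_asc h1 h2 h3 h2).mpr rfl

lemma gperm_val_s1 {s a : ℕ} (h1 : n ≤ s + a + 1) (h2 : s + 1 < n) (h3 : a < n) :
    pf (gperm n s a h1 h2 h3) (s + 1) = a := by
  rw [pf_gperm h1 h2 h3 h2]
  unfold gv
  split_ifs <;> omega

lemma pf_rev {j : ℕ} (hj : j < n) :
    pf (Fin.revPerm : Equiv.Perm (Fin n)) j + (j + 1) = n := by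
  rw [pf_val _ hj, Fin.revPerm_apply, Fin.val_rev]
  show n - (j + 1) + (j + 1) = n
  omega

lemma rev_H123 : H123 (Fin.revPerm : Equiv.Perm (Fin n)) := by
  intro i j hij hj hx hy
  have e1 := pf_rev (n := n) (show i < n by omega)
  have e2 := pf_rev (n := n) (show j < n by omega)
  omega

lemma rev_H231 : H231 (Fin.revPerm : Equiv.Perm (Fin n)) := by
  intro i j hij hj hx hy
  have e1 := pf_rev (n := n) (show i < n by omega)
  have e2 := pf_rev (n := n) (show j < n by omega)
  omega

lemma rev_noasc : ∀ t, ¬ Asc (Fin.revPerm : Equiv.Perm (Fin n)) t := by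
  rintro t ⟨ht, hasc⟩
  have e1 := pf_rev (n := n) (show t < n by omega)
  have e2 := pf_rev (n := n) ht
  omega

/-- the bijection from parameters to avoiding permutations -/
noncomputable def Fmap (m : ℕ) :
    Option {p : Fin m × Fin (m + 1) // m + 1 ≤ p.1.1 + p.2.1 + 1} →
      {π : Equiv.Perm (Fin (m + 1)) // ¬ contains123 π ∧ ¬ contains231 π}
  | none => ⟨Fin.revPerm, not_contains123 rev_H123, not_contains231 rev_H231⟩
  | some ⟨⟨s, a⟩, hc⟩ =>
    ⟨gperm (m + 1) s.1 a.1 hc (by have := s.2; omega) a.2,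
      not_contains123 (gperm_H123 _ _ _), not_contains231 (gperm_H231 _ _ _)⟩

lemma gperm_eq_params {s a s' a' : ℕ} {h1 h2 h3 h1' h2' h3'}
    (h : gperm n s a h1 h2 h3 = gperm n s' a' h1' h2' h3') : s = s' ∧ a = a' := by
  have hpf : ∀ j, pf (gperm n s a h1 h2 h3) j = pf (gperm n s' a' h1' h2' h3') j :=
    fun j => by rw [h]
  have hasc' : Asc (gperm n s a h1 h2 h3) s' := by
    have h0 := gperm_asc h1' h2' h3'
    exact ⟨h0.1, by rw [hpf s', hpf (s' + 1)]; exact h0.2⟩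
  have hss : s = s' :=
    asc_unique (gperm_H123 h1 h2 h3) (gperm_H231 h1 h2 h3) (gperm_asc h1 h2 h3) hasc'
  subst hss
  have e1 := gperm_val_s1 h1 h2 h3
  have e2 := gperm_val_s1 h1' h2' h3'
  rw [← hpf (s + 1)] at e2
  exact ⟨rfl, by omega⟩

lemma Fmap_inj (m : ℕ) : Function.Injective (Fmap m) := by
  intro t1 t2 h
  match t1, t2 with
  | none, none => rfl
  | none, some ⟨⟨s, a⟩, hc⟩ =>
    exfalso
    have he := congrArg Subtype.val h
    simp only [Fmap] at he
    exact rev_noasc s.1 (he ▸ gperm_asc _ _ _)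
  | some ⟨⟨s, a⟩, hc⟩, none =>
    exfalso
    have he := (congrArg Subtype.val h).symm
    simp only [Fmap] at he
    exact rev_noasc s.1 (he ▸ gperm_asc _ _ _)
  | some ⟨⟨s, a⟩, hc⟩, some ⟨⟨s', a'⟩, hc'⟩ =>
    have he0 := congrArg Subtype.val h
    simp only [Fmap] at he0
    have he := gperm_eq_params he0
    have : s = s' := Fin.ext he.1
    subst this
    have : a = a' := Fin.ext he.2
    subst this
    rfl

lemma Fmap_surj (m : ℕ) : Function.Surjective (Fmap m) := by
  rintro ⟨π, hc1, hc2⟩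
  have h123 := H123_of hc1
  have h231 := H231_of hc2
  by_cases hasc : ∃ s, Asc π s
  · obtain ⟨s, hs⟩ := hasc
    have hs1 := hs.1
    have hs2 := hs.2
    have hcon := asc_constraint h123 h231 hs
    have ha : pf π (s + 1) < m + 1 := pf_lt π hs1
    refine ⟨some ⟨(⟨s, by omega⟩, ⟨pf π (s + 1), ha⟩), hcon⟩, ?_⟩
    apply Subtype.ext
    simp only [Fmap]
    apply Equiv.ext
    intro x
    apply Fin.ext
    rw [pf_apply, pf_apply, pf_gperm _ _ _ x.2, pf_eq_gv h123 h231 hs x.1 x.2]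
  · refine ⟨none, ?_⟩
    apply Subtype.ext
    show (Fin.revPerm : Equiv.Perm (Fin (m + 1))) = π
    have hno : ∀ t, ¬ Asc π t := not_exists.mp hasc
    apply Equiv.ext
    intro x
    apply Fin.ext
    rw [pf_apply, pf_apply]
    have e1 := pf_rev (n := m + 1) x.2
    have e2 := noasc_eq hno x.1 x.2
    omega

/-- the count of the parameter space -/
lemma count_pairs (m : ℕ) :
    Nat.card {p : Fin m × Fin (m + 1) // m + 1 ≤ p.1.1 + p.2.1 + 1} = (m + 1).choose 2 := by
  have e1 := Equiv.subtypeProdEquivSigmaSubtype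
    (fun (s : Fin m) (a : Fin (m + 1)) => m + 1 ≤ s.1 + a.1 + 1)
  rw [Nat.card_congr e1]
  have e2 : ∀ s : Fin m, {a : Fin (m + 1) // m + 1 ≤ s.1 + a.1 + 1} ≃ Fin (s.1 + 1) := by
    intro s
    refine ⟨fun a => ⟨a.1.1 - (m - s.1), ?_⟩, fun k => ⟨⟨k.1 + (m - s.1), ?_⟩, ?_⟩, ?_, ?_⟩
    · have hA := a.1.2
      have hB := a.2
      have hC := s.2
      omega
    · have hA := k.2
      have hC := s.2
      omega
    · show m + 1 ≤ s.1 + (k.1 + (m - s.1)) + 1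
      have hA := k.2
      have hC := s.2
      omega
    · intro a
      apply Subtype.ext
      apply Fin.ext
      show a.1.1 - (m - s.1) + (m - s.1) = a.1.1
      have hB := a.2
      have hC := s.2
      omega
    · intro k
      apply Fin.ext
      show k.1 + (m - s.1) - (m - s.1) = k.1
      omega
  have hcard : Nat.card (Σ s : Fin m, {a : Fin (m + 1) // m + 1 ≤ s.1 + a.1 + 1})
      = ∑ s : Fin m, (s.1 + 1) := by
    rw [Nat.card_eq_fintype_card, Fintype.card_sigma]
    exact Finset.sum_congr rfl fun s _ => by
      rw [Fintype.card_congr (e2 s), Fintype.card_fin]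
  rw [hcard, Fin.sum_univ_eq_sum_range (fun i => i + 1) m]
  have h1 := Finset.sum_range_id_mul_two (m + 1)
  have h2 := Finset.sum_range_succ' (fun i => i) m
  rw [Nat.choose_two_right]
  omega

end Assembly

end Stmt6Aux

theorem stmt6 (n : ℕ) (hn : 1 ≤ n) :
    Nat.card {π : Equiv.Perm (Fin n) // ¬ contains123 π ∧ ¬ contains231 π} = Nat.choose n 2 + 1 := by
  obtain ⟨m, rfl⟩ : ∃ m, n = m + 1 := ⟨n - 1, by omega⟩
  rw [← Nat.card_eq_of_bijective (Stmt6Aux.Fmap m) ⟨Stmt6Aux.Fmap_inj m, Stmt6Aux.Fmap_surj m⟩]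
  rw [Nat.card_eq_fintype_card, Fintype.card_option, ← Nat.card_eq_fintype_card,
    Stmt6Aux.count_pairs m]
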